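/- arXiv:2308.03706 — 4 statements merged into one kernel-verified Lean document; each statement's English description precedes it below -/
import Mathlib

section
/- Let p, w : ℝ → ℝ be smooth with p(t) > 0 for all t. If the cross product of the second derivative vector (p''(t), 0, w''(t)) with the normal vector N(t) = (−w'(t), p(t)·p'(t), p'(t)) is the zero vector for all t, then p''(t) = 0 for all t, and hence p is constant. -/
/-- If the cross product of the acceleration vector `(p'', 0, w'')` with the normal vector
`N = (−w', p·p', p')` vanishes identically and `p > 0` everywhere, then `p'' = 0`
everywhere and `p` is constant. -/
theorem cross_product_zero_implies_price_constant
    (p w : ℝ → ℝ) (hp : ContDiff ℝ (⊤ : ℕ∞) p) (hw : ContDiff ℝ (⊤ : ℕ∞) w)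
    (hpos : ∀ t : ℝ, 0 < p t)
    (hcross : ∀ t : ℝ,
      (0 * deriv p t - deriv (deriv w) t * (p t * deriv p t) = 0)
      ∧ (deriv (deriv w) t * (-(deriv w t)) - deriv (deriv p) t * deriv p t = 0)
      ∧ (deriv (deriv p) t * (p t * deriv p t) - 0 * (-(deriv w t)) = 0)) :
    (∀ t : ℝ, deriv (deriv p) t = 0) ∧ (∀ s t : ℝ, p s = p t) := by
  have hdp : Differentiable ℝ (deriv p) :=
    ((contDiff_infty_iff_deriv.mp (hp.of_le (by simp))).2).differentiable (by simp)
  -- p'' * p' = 0 everywhere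
  have key : ∀ t, deriv (deriv p) t * deriv p t = 0 := by
    intro t
    have h := (hcross t).2.2
    have h' : p t * (deriv (deriv p) t * deriv p t) = 0 := by ring_nf; ring_nf at h; linarith
    exact (mul_eq_zero.mp h').resolve_left (ne_of_gt (hpos t))
  -- (p')² has zero derivative, hence is constant
  have hsq : ∀ t, deriv (fun s => deriv p s ^ 2) t = 0 := by
    intro t
    have : HasDerivAt (fun s => deriv p s ^ 2)
        (2 * deriv p t ^ (2 - 1) * deriv (deriv p) t) t := ((hdp t).hasDerivAt).pow 2
    rw [this.deriv, pow_one]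
    linear_combination 2 * key t
  have hsqconst : ∀ t, deriv p t ^ 2 = deriv p 0 ^ 2 := by
    intro t
    have := is_const_of_deriv_eq_zero (f := fun s => deriv p s ^ 2)
      (fun s => (hdp s).pow 2) hsq t 0
    simpa using this
  -- p'' = 0 everywhere
  have hpp : ∀ t, deriv (deriv p) t = 0 := by
    by_cases hc : deriv p 0 = 0
    · have hz : ∀ t, deriv p t = 0 := by
        intro t
        have := hsqconst t
        rw [hc] at this
        nlinarith
      have : deriv p = fun _ => (0 : ℝ) := funext hz
      intro t
      rw [this]
      simp
    · intro t
      have hnz : deriv p t ≠ 0 := by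
        intro h
        apply hc
        have := hsqconst t
        rw [h] at this
        nlinarith
      exact (mul_eq_zero.mp (key t)).resolve_right hnz
  refine ⟨hpp, ?_⟩
  -- p' is constant, say c
  have hconst : ∀ t, deriv p t = deriv p 0 :=
    fun t => is_const_of_deriv_eq_zero hdp hpp t 0
  set c := deriv p 0 with hc
  -- p t = p 0 + c * t
  have hlin : ∀ t, p t = p 0 + c * t := by
    have hdiffp : Differentiable ℝ p := hp.differentiable (by simp)
    have hg : ∀ t, deriv (fun s => p s - c * s) t = 0 := by
      intro t
      have : HasDerivAt (fun s => p s - c * s) (deriv p t - c * 1) t :=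
        (hdiffp t).hasDerivAt.sub ((hasDerivAt_id t).const_mul c)
      rw [this.deriv, hconst t]
      ring
    intro t
    have := is_const_of_deriv_eq_zero (f := fun s => p s - c * s)
      (fun s => (hdiffp s).sub (differentiable_id.const_mul c s)) hg t 0
    simp at this
    linarith
  -- c = 0 by positivity
  have hc0 : c = 0 := by
    by_contra hne
    have := hpos (-(p 0 + 1) / c)
    rw [hlin] at this
    rw [mul_div_cancel₀ _ hne] at this
    linarith
  intro s t
  rw [hlin s, hlin t, hc0]
  ring
end

section
/- Let p, w : ℝ → ℝ be smooth with p(t) > 0 for all t and (p'(t))² + (w'(t))² = 1 for all t. If both (1 + p(t)²)·p'(t)·p''(t) + w'(t)·w''(t) = 0 and p(t)·(w'(t)·p'(t)·p''(t) − w''(t)·p'(t)²) = 0 hold for all t, then p'(t) = 0 for all t (the price is constant). -/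
/-- The geodesic equations for the coordinate curve `γ(t) = Φ(t, 0)` on the equilibrium
manifold, together with positivity of prices and arc-length parametrization, force the
price to be constant. -/
theorem geodesic_equations_imply_constant_price
    (p w : ℝ → ℝ) (hp : ContDiff ℝ (⊤ : ℕ∞) p) (hw : ContDiff ℝ (⊤ : ℕ∞) w)
    (hpos : ∀ t : ℝ, 0 < p t)
    (harc : ∀ t : ℝ, (deriv p t) ^ 2 + (deriv w t) ^ 2 = 1)
    (hgeo1 : ∀ t : ℝ,
      (1 + (p t) ^ 2) * deriv p t * deriv (deriv p) t
        + deriv w t * deriv (deriv w) t = 0)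
    (hgeo2 : ∀ t : ℝ,
      p t * (deriv w t * deriv p t * deriv (deriv p) t
        - deriv (deriv w) t * (deriv p t) ^ 2) = 0) :
    ∀ t : ℝ, deriv p t = 0 := by
  have hdp' : Differentiable ℝ (deriv p) :=
    (contDiff_infty_iff_deriv.mp (hp.of_le (by simp))).2.differentiable (by simp)
  have hdw' : Differentiable ℝ (deriv w) :=
    (contDiff_infty_iff_deriv.mp (hw.of_le (by simp))).2.differentiable (by simp)
  -- derivative of the arc-length condition
  have h0 : ∀ t : ℝ, deriv p t * deriv (deriv p) t + deriv w t * deriv (deriv w) t = 0 := by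
    intro t
    have hf : HasDerivAt (fun t => (deriv p t) ^ 2 + (deriv w t) ^ 2)
        (2 * deriv p t * deriv (deriv p) t + 2 * deriv w t * deriv (deriv w) t) t := by
      have h1 := ((hdp' t).hasDerivAt.pow 2).add ((hdw' t).hasDerivAt.pow 2)
      exact h1.congr_deriv (by norm_num)
    have : (fun t => (deriv p t) ^ 2 + (deriv w t) ^ 2) = fun _ => (1:ℝ) := funext harc
    rw [this] at hf
    have := hf.deriv
    rw [deriv_const] at this
    nlinarith [this]
  -- hence p' * p'' = 0 everywhere
  have hpp : ∀ t : ℝ, deriv p t * deriv (deriv p) t = 0 := by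
    intro t
    have h1 := hgeo1 t
    have h2 := h0 t
    have hpt := (hpos t).ne'
    have : (p t) ^ 2 * (deriv p t * deriv (deriv p) t) = 0 := by nlinarith
    have hpt2 : (p t) ^ 2 ≠ 0 := pow_ne_zero 2 hpt
    exact (mul_eq_zero.mp this).resolve_left hpt2
  -- so (p')² is constant
  have hconst : ∀ s t : ℝ, (deriv p s) ^ 2 = (deriv p t) ^ 2 := by
    have hdiff : Differentiable ℝ (fun t => (deriv p t) ^ 2) := fun t =>
      ((hdp' t).hasDerivAt.pow 2).differentiableAt
    have hderiv : ∀ t, deriv (fun t => (deriv p t) ^ 2) t = 0 := by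
      intro t
      have := ((hdp' t).hasDerivAt.pow 2).deriv
      change deriv (deriv p ^ 2) t = 0
      rw [this]
      have := hpp t
      ring_nf
      nlinarith [hpp t]
    exact fun s t => is_const_of_deriv_eq_zero hdiff hderiv s t
  -- conclude by contradiction
  intro t₀
  by_contra h
  have hne : ∀ t : ℝ, deriv p t ≠ 0 := by
    intro t ht
    have := hconst t₀ t
    rw [ht] at this
    simp at this
    exact h this
  -- then p'' = 0 everywhere, so p' is constant
  have hpp0 : ∀ t : ℝ, deriv (deriv p) t = 0 := fun t =>
    (mul_eq_zero.mp (hpp t)).resolve_left (hne t)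
  have hp'const : ∀ t : ℝ, deriv p t = deriv p t₀ := fun t =>
    is_const_of_deriv_eq_zero hdp' hpp0 t t₀
  set u := deriv p t₀ with hu
  -- p is linear: p t = p 0 + u * t
  have hlin : ∀ t : ℝ, p t - u * t = p 0 := by
    intro t
    have hdiff : Differentiable ℝ (fun t => p t - u * t) := fun t =>
      ((hp.differentiable (by simp) t).hasDerivAt.sub ((hasDerivAt_id t).const_mul u)).differentiableAt
    have hderiv : ∀ t, deriv (fun t => p t - u * t) t = 0 := by
      intro t
      have h1 : HasDerivAt (fun t => p t - u * t) (deriv p t - u * 1) t :=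
        (hp.differentiable (by simp) t).hasDerivAt.sub ((hasDerivAt_id t).const_mul u)
      rw [h1.deriv, hp'const t]
      ring
    have := is_const_of_deriv_eq_zero hdiff hderiv t 0
    simpa using this
  have hu0 : u ≠ 0 := hne t₀
  have hbad := hpos (-(p 0 + 1) / u)
  have := hlin (-(p 0 + 1) / u)
  have hval : p (-(p 0 + 1) / u) = p 0 + u * (-(p 0 + 1) / u) := by linarith
  rw [hval] at hbad
  field_simp at hbad
  linarith
end

section
/- Let p₁,…,p_{L−1}, w : ℝ → ℝ be smooth, and define Φ : ℝ^L → ℝ^{2L−1} by Φ(t, α₁,…,α_{L−1}) = (p₁(t),…,p_{L−1}(t), α₁,…,α_{L−1}, w(t) − Σⱼ pⱼ(t)·αⱼ). Suppose each pⱼ(t) > 0 for all t, the curve γ(t) = Φ(t, 0,…,0) is parametrized by arc length (i.e., Σⱼ(pⱼ')² + (w')² = 1), and γ together with all curves t ↦ Φ(t, e_j) for j = 1,…,L−1 (e_j the j-th standard basis vector of ℝ^{L−1}) are geodesics of the submanifold Φ(ℝ^L) with the induced Euclidean metric. Then every pⱼ is constant. -/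
open scoped BigOperators

/-- Dot product on `ℝ^{2L-1}` represented as `(Fin n → ℝ) × (Fin n → ℝ) × ℝ`
(price components, endowment components, last income component). -/
def dotV (n : ℕ) (x y : (Fin n → ℝ) × (Fin n → ℝ) × ℝ) : ℝ :=
  (∑ j, x.1 j * y.1 j) + (∑ j, x.2.1 j * y.2.1 j) + x.2.2 * y.2.2

/-- Parametrization of the equilibrium manifold for `M = 2` consumers:
`Φ(t, α) = (p₁(t),…,p_{L−1}(t), α₁,…,α_{L−1}, w(t) − Σⱼ pⱼ(t)αⱼ)`. -/
noncomputable def PhiE (n : ℕ) (p : Fin n → ℝ → ℝ) (w : ℝ → ℝ) (t : ℝ) (α : Fin n → ℝ) :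
    (Fin n → ℝ) × (Fin n → ℝ) × ℝ :=
  (fun j => p j t, α, w t - ∑ j, p j t * α j)

/-- Ambient acceleration of the curve `t ↦ Φ(t, α)` for a fixed `α`. -/
noncomputable def accelE (n : ℕ) (p : Fin n → ℝ → ℝ) (w : ℝ → ℝ) (α : Fin n → ℝ) (t : ℝ) :
    (Fin n → ℝ) × (Fin n → ℝ) × ℝ :=
  (fun j => deriv (deriv (p j)) t, fun _ => 0,
    deriv (deriv (fun s => w s - ∑ j, p j s * α j)) t)

/-- Tangent vector `∂Φ/∂t` at the point `Φ(t, α)`. -/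
noncomputable def tangentT (n : ℕ) (p : Fin n → ℝ → ℝ) (w : ℝ → ℝ) (α : Fin n → ℝ) (t : ℝ) :
    (Fin n → ℝ) × (Fin n → ℝ) × ℝ :=
  (fun j => deriv (p j) t, fun _ => 0, deriv w t - ∑ j, deriv (p j) t * α j)

/-- Tangent vector `∂Φ/∂α_k` at the point `Φ(t, α)`. -/
noncomputable def tangentA (n : ℕ) (p : Fin n → ℝ → ℝ) (k : Fin n) (t : ℝ) :
    (Fin n → ℝ) × (Fin n → ℝ) × ℝ :=
  (fun _ => 0, fun j => if j = k then 1 else 0, -(p k t))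

/-- The curve `t ↦ Φ(t, α)` is a geodesic of the submanifold `Φ(ℝ^L)` with the induced
Euclidean metric: its ambient acceleration is orthogonal to the tangent space. -/
noncomputable def IsGeodesicLine (n : ℕ) (p : Fin n → ℝ → ℝ) (w : ℝ → ℝ)
    (α : Fin n → ℝ) : Prop :=
  ∀ t : ℝ, dotV n (accelE n p w α t) (tangentT n p w α t) = 0
    ∧ ∀ k : Fin n, dotV n (accelE n p w α t) (tangentA n p k t) = 0

/-- Main theorem: in a two-consumer, `L`-good economy, if the `L` coordinate curves
`t ↦ Φ(t, 0)` and `t ↦ Φ(t, e_j)` (`j = 1,…,L−1`) are geodesics of the equilibrium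
manifold, with positive prices and arc-length parametrization, then every price is
constant. -/
theorem finite_geodesic_property_implies_constant_prices
    (L : ℕ) (hL : 2 ≤ L)
    (p : Fin (L - 1) → ℝ → ℝ) (w : ℝ → ℝ)
    (hp : ∀ j, ContDiff ℝ (⊤ : ℕ∞) (p j)) (hw : ContDiff ℝ (⊤ : ℕ∞) w)
    (hpos : ∀ j t, 0 < p j t)
    (harc : ∀ t : ℝ, (∑ j, (deriv (p j) t) ^ 2) + (deriv w t) ^ 2 = 1)
    (hgeo0 : IsGeodesicLine (L - 1) p w 0)
    (hgeoj : ∀ m : Fin (L - 1),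
      IsGeodesicLine (L - 1) p w (fun j => if j = m then 1 else 0)) :
    ∀ j, ∀ s t : ℝ, p j s = p j t := by
  have hne : 0 < L - 1 := by omega
  have hp' : ∀ j, ContDiff ℝ ((⊤ : ℕ∞) : WithTop ℕ∞) (p j) := fun j => (hp j).of_le (by simp)
  have hw' : ContDiff ℝ ((⊤ : ℕ∞) : WithTop ℕ∞) w := hw.of_le (by simp)
  have d1 : ∀ k, Differentiable ℝ (p k) :=
    fun k => (hp' k).differentiable (by simp)
  have d2 : ∀ k, Differentiable ℝ (deriv (p k)) := fun k =>
    (contDiff_infty_iff_deriv.mp (hp' k)).2.differentiable (by simp)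
  have dw1 : Differentiable ℝ w := hw'.differentiable (by simp)
  have dw2 : Differentiable ℝ (deriv w) :=
    (contDiff_infty_iff_deriv.mp hw').2.differentiable (by simp)
  -- second derivative of w vanishes
  have hw2 : ∀ t, deriv (deriv w) t = 0 := by
    intro t
    have h := (hgeo0 t).2 ⟨0, hne⟩
    simp [dotV, accelE, tangentA] at h
    exact h.resolve_right (ne_of_gt (hpos _ t))
  -- second derivative of each p m vanishes
  have key : ∀ m t, deriv (deriv (p m)) t = 0 := by
    intro m t
    have h := ((hgeoj m) t).2 m
    simp [dotV, accelE, tangentA] at h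
    have h2 : deriv (deriv fun s => w s - p m s) t = 0 :=
      h.resolve_right (ne_of_gt (hpos m t))
    have h1 : deriv (fun s => w s - p m s) = fun s => deriv w s - deriv (p m) s := by
      funext s; exact deriv_sub (dw1 s) (d1 m s)
    rw [h1, deriv_fun_sub (dw2 t) (d2 m t), hw2 t] at h2
    linarith
  -- deriv (p m) is constant
  have hc : ∀ m t, deriv (p m) t = deriv (p m) 0 := fun m t =>
    is_const_of_deriv_eq_zero (d2 m) (key m) t 0
  -- the constant slope must be zero
  have hzero : ∀ m, deriv (p m) 0 = 0 := by
    intro m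
    by_contra ha
    set a := deriv (p m) 0 with haa
    have hline : ∀ x : ℝ, p m x = p m 0 + a * x := by
      intro x
      have hg : ∀ y, deriv (fun s => p m s - a * s) y = 0 := by
        intro y
        have hda : deriv (fun s : ℝ => a * s) y = a := by
          simpa using ((hasDerivAt_id y).const_mul a).deriv
        rw [deriv_fun_sub (d1 m y) (by fun_prop), hda, hc m y]
        ring
      have := is_const_of_deriv_eq_zero
        (fun y => (d1 m y).sub (by fun_prop)) hg x 0
      simp at this
      linarith
    have := hpos m (-(p m 0 + 1) / a)
    rw [hline, mul_div_cancel₀ _ ha] at this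
    linarith
  intro j s t
  exact is_const_of_deriv_eq_zero (d1 j)
    (fun x => (hc j x).trans (hzero j)) s t
end

section
/- Fix constants p₁,…,p_{L−2} > 0, let p_{L−1}(t) = t, and let w : ℝ → ℝ be smooth. Define Φ(t, α₁,…,α_{L−1}) = (p₁,…,p_{L−2}, t, α₁,…,α_{L−1}, w(t) − Σⱼ₌₁^{L−2} pⱼαⱼ − t·α_{L−1}) ⊂ ℝ^{2L−1}. Then there exist choices of w for which the curves Φ(t,0,…,0) and Φ(0, e_j), j = 1,…,L−1, are all geodesics of the image submanifold, yet p_{L−1} is not constant. -/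
open scoped BigOperators

lemma second_deriv_id' : deriv (deriv (fun s : ℝ => s)) = fun _ => 0 := by
  have h1 : deriv (fun s : ℝ => s) = fun _ : ℝ => (1 : ℝ) := by
    funext t; simp
  rw [h1]; funext t; simp

lemma accel_zero (m : ℕ) (c : Fin (m + 1) → ℝ) (α : Fin (m + 1) → ℝ)
    (hα : (∀ j, α j = 0) ∨ ∃ k, α = fun j => if j = k then 1 else 0) (t : ℝ) :
    accelE (m + 1) (fun j => if j = Fin.last m then (fun t => t) else (fun _ => c j))
      (fun _ => 0) α t = 0 := by
  have hp2 : ∀ j : Fin (m + 1),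
      deriv (deriv (if j = Fin.last m then (fun t : ℝ => t) else (fun _ => c j))) t = 0 := by
    intro j
    by_cases hj : j = Fin.last m
    · simp [hj, second_deriv_id']
    · simp [hj]
  have hsum : ∀ s : ℝ,
      ((fun _ : ℝ => (0:ℝ)) s - ∑ j, (if j = Fin.last m then (fun t : ℝ => t) else (fun _ => c j)) s * α j)
        = -(α (Fin.last m)) * s - ∑ j ∈ Finset.univ.erase (Fin.last m), c j * α j := by
    intro s
    have hterm : ∀ j, (if j = Fin.last m then (fun t : ℝ => t) else (fun _ : ℝ => c j)) s * α j
        = (if j = Fin.last m then s else c j) * α j := by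
      intro j; split <;> rfl
    simp only [hterm]
    rw [← Finset.sum_erase_add _ _ (Finset.mem_univ (Fin.last m))]
    rw [Finset.sum_congr rfl (fun j hj => by
      rw [if_neg (Finset.ne_of_mem_erase hj)])]
    simp; ring
  have hlast : deriv (deriv (fun s : ℝ =>
      (fun _ : ℝ => (0:ℝ)) s - ∑ j, (if j = Fin.last m then (fun t : ℝ => t) else (fun _ => c j)) s * α j)) t = 0 := by
    have : (fun s : ℝ =>
        (fun _ : ℝ => (0:ℝ)) s - ∑ j, (if j = Fin.last m then (fun t : ℝ => t) else (fun _ => c j)) s * α j)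
        = fun s => -(α (Fin.last m)) * s - ∑ j ∈ Finset.univ.erase (Fin.last m), c j * α j :=
      funext hsum
    rw [this]
    have hd : deriv (fun s : ℝ => -(α (Fin.last m)) * s
        - ∑ j ∈ Finset.univ.erase (Fin.last m), c j * α j)
        = fun _ : ℝ => -(α (Fin.last m)) := by
      funext s
      have h1 : HasDerivAt (fun s : ℝ => -(α (Fin.last m)) * s
          - ∑ j ∈ Finset.univ.erase (Fin.last m), c j * α j) (-(α (Fin.last m))) s := by
        simpa using ((hasDerivAt_id s).const_mul (-(α (Fin.last m)))).sub_const (∑ j ∈ Finset.univ.erase (Fin.last m), c j * α j)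
      exact h1.deriv
    rw [hd]; simp
  unfold accelE
  refine Prod.ext ?_ (Prod.ext ?_ ?_)
  · funext j; exact hp2 j
  · rfl
  · exact hlast

lemma dotV_zero_left (n : ℕ) (y : (Fin n → ℝ) × (Fin n → ℝ) × ℝ) :
    dotV n 0 y = 0 := by
  simp [dotV, Prod.fst, Prod.snd]

/-- Counterexample (Remark 1): with `p₁,…,p_{L−2}` positive constants and
`p_{L−1}(t) = t` (which fails positivity on ℝ), there is a smooth `w` for which all the
coordinate curves `t ↦ Φ(t, 0)` and `t ↦ Φ(t, e_j)` are geodesics, yet `p_{L−1}` is not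
constant. -/
theorem positivity_is_essential
    (m : ℕ) (c : Fin (m + 1) → ℝ) (hc : ∀ j, 0 < c j) :
    ∃ w : ℝ → ℝ, ContDiff ℝ (⊤ : ℕ∞) w ∧
      (let p : Fin (m + 1) → ℝ → ℝ :=
        fun j => if j = Fin.last m then (fun t => t) else (fun _ => c j)
       IsGeodesicLine (m + 1) p w 0
        ∧ (∀ k : Fin (m + 1),
            IsGeodesicLine (m + 1) p w (fun j => if j = k then 1 else 0))
        ∧ ¬ (∀ s t : ℝ, p (Fin.last m) s = p (Fin.last m) t)) := by
  refine ⟨fun _ => 0, contDiff_const, ?_, ?_, ?_⟩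
  · intro t
    rw [accel_zero m c 0 (Or.inl fun j => rfl) t]
    exact ⟨dotV_zero_left _ _, fun k => dotV_zero_left _ _⟩
  · intro k t
    rw [accel_zero m c _ (Or.inr ⟨k, rfl⟩) t]
    exact ⟨dotV_zero_left _ _, fun k => dotV_zero_left _ _⟩
  · intro h
    have := h 0 1
    simp at this
end
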